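/- Let H be a commutative bialgebra, A a commutative right H-comodule algebra, and X an invertible grouplike element of A⊗H. Then the coinvariants of the relative Hopf module A^X (A with coaction ρ_X(a) = Xa) equal A_{X^{-1}} = {a ∈ A : ρ(a) = aX^{-1}}. Consequently, A^X is coinvariantly generated if and only if A·A_{X^{-1}} = A. -/

import Mathlib

open TensorProduct

universe u

/-- A commutative right `H`-comodule algebra: a commutative `k`-algebra `A` together with
a coassociative counital coaction `ρ : A → A ⊗ H` which is an algebra map. -/
structure ComodAlg (k H A : Type u) [CommRing k] [Ring H] [Bialgebra k H]
    [CommRing A] [Algebra k A] : Type u where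
  ρ : A →ₐ[k] A ⊗[k] H
  counit_comp : ∀ a : A,
    (TensorProduct.rid k A) ((LinearMap.lTensor A (Coalgebra.counit (R := k) (A := H))) (ρ a)) = a
  coassoc : ∀ a : A,
    (LinearMap.lTensor A (Coalgebra.comul (R := k) (A := H))) (ρ a)
      = (TensorProduct.assoc k A H H) ((LinearMap.rTensor H ρ.toLinearMap) (ρ a))

namespace ComodAlg

variable {k H A : Type u} [CommRing k] [Ring H] [Bialgebra k H]
  [CommRing A] [Algebra k A] (c : ComodAlg k H A)

/-- The subset of coinvariant elements `B = A^{co H}`. -/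
def coinvSet : Set A := {a : A | c.ρ a = a ⊗ₜ[k] 1}

/-- The coinvariants `B = A^{co H}` as a subalgebra of `A`. -/
def coinvAlg : Subalgebra k A where
  carrier := c.coinvSet
  mul_mem' {a} {b} ha hb := by
    simp only [coinvSet, Set.mem_setOf_eq] at *
    rw [map_mul, ha, hb, Algebra.TensorProduct.tmul_mul_tmul, mul_one]
  add_mem' {a} {b} ha hb := by
    simp only [coinvSet, Set.mem_setOf_eq] at *
    rw [map_add, ha, hb, ← add_tmul]
  algebraMap_mem' r := by
    simp only [coinvSet, Set.mem_setOf_eq, AlgHom.commutes,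
      Algebra.TensorProduct.algebraMap_apply]

end ComodAlg

namespace ComodAlg

variable {k H A : Type u} [CommRing k] [CommRing H] [Bialgebra k H]
  [CommRing A] [Algebra k A] (c : ComodAlg k H A)

/-- `Σ aᵢ ⊗ (hᵢ)₍₁₎ ⊗ (hᵢ)₍₂₎`, the comultiplication of the coring `A ⊗ H` applied to `x`,
written in `(A ⊗ H) ⊗ H` via the canonical identification `(A ⊗ H) ⊗_A (A ⊗ H) ≅ A ⊗ H ⊗ H`. -/
noncomputable def coact2 : A ⊗[k] H →ₗ[k] (A ⊗[k] H) ⊗[k] H :=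
  (TensorProduct.assoc k A H H).symm.toLinearMap ∘ₗ
    LinearMap.lTensor A (Coalgebra.comul (R := k) (A := H))

/-- `Σ_{i,j} aᵢ (a_j)₍₀₎ ⊗ hᵢ (a_j)₍₁₎ ⊗ h_j`, the image of `x ⊗_A x` under the canonical
identification `(A ⊗ H) ⊗_A (A ⊗ H) ≅ A ⊗ H ⊗ H`. -/
noncomputable def sqRHS (x : A ⊗[k] H) : (A ⊗[k] H) ⊗[k] H :=
  (LinearMap.rTensor H (LinearMap.mulLeft k x)) ((LinearMap.rTensor H c.ρ.toLinearMap) x)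

/-- `x` is a grouplike element of the `A`-coring `A ⊗ H`; equivalently, `x` is a
normalized Harrison 1-cocycle. -/
noncomputable def IsGrouplike (x : A ⊗[k] H) : Prop :=
  coact2 x = c.sqRHS x ∧
    (TensorProduct.rid k A) ((LinearMap.lTensor A (Coalgebra.counit (R := k) (A := H))) x) = 1

/-- The map `d : 𝔾ₘ(A) → Gⁱ(A ⊗ H)`, `d(a) = a⁻¹ a₍₀₎ ⊗ a₍₁₎`. -/
noncomputable def d (a : Aˣ) : A ⊗[k] H := (((↑a⁻¹ : A) ⊗ₜ[k] (1 : H)) : A ⊗[k] H) * c.ρ ↑a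

end ComodAlg

namespace ComodAlg

variable {k H A : Type u} [CommRing k] [CommRing H] [Bialgebra k H]
  [CommRing A] [Algebra k A] (c : ComodAlg k H A)

/-- `A_X = {a ∈ A | ρ(a) = aX}`. -/
def AX (x : A ⊗[k] H) : Set A := {a : A | c.ρ a = (a ⊗ₜ[k] (1 : H) : A ⊗[k] H) * x}

/-- The coinvariants of the relative Hopf module `A^X`, whose coaction is
`ρ_X(a) = X · a = X ρ(a)`. -/
def coinvAX (x : A ⊗[k] H) : Set A :=
  {a : A | x * c.ρ a = (a ⊗ₜ[k] (1 : H) : A ⊗[k] H)}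

end ComodAlg

/-- for an invertible grouplike `X` of `A ⊗ H`, the coinvariants of the
relative Hopf module `A^X` (with coaction `ρ_X(a) = Xa`) are exactly
`A_{X⁻¹} = {a | ρ(a) = a X⁻¹}`; consequently `A^X` is coinvariantly generated
(the `A`-span of its coinvariants is everything) iff `A · A_{X⁻¹} = A`. -/
theorem coinvariants_of_AX {k H A : Type u} [CommRing k] [CommRing H] [Bialgebra k H]
    [CommRing A] [Algebra k A] (c : ComodAlg k H A) (X : (A ⊗[k] H)ˣ)
    (hX : c.IsGrouplike ↑X) :
    c.coinvAX ↑X = c.AX ↑X⁻¹ ∧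
    (Submodule.span A (c.coinvAX ↑X) = ⊤ ↔ Ideal.span (c.AX ↑X⁻¹) = ⊤) := by
  have heq : c.coinvAX ↑X = c.AX ↑X⁻¹ := by
    ext a
    simp only [ComodAlg.coinvAX, ComodAlg.AX, Set.mem_setOf_eq]
    rw [Units.eq_mul_inv_iff_mul_eq, mul_comm]
  exact ⟨heq, by rw [heq]⟩
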